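/- Three-stage impact theorem: for unit covectors u ≠ ±v, the following are equivalent: (i) ⟨u,v⟩ = -1/2; (ii) for every momentum p with ⟨p,u⟩ ≤ ⟨p,v⟩ < 0, one has p Γ(u)Γ(v)Γ(u) = p Γ(v)Γ(u)Γ(v), and this common value p_f is feasible, with explicitly ⟨p_f,u⟩ = -⟨p,v⟩ > 0 and ⟨p_f,v⟩ = -⟨p,u⟩ > 0. -/

import Mathlib

open Matrix

noncomputable def kin {n : ℕ} (M : Matrix (Fin n) (Fin n) ℝ)
    (x y : Matrix (Fin 1) (Fin n) ℝ) : ℝ :=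
  (x * M⁻¹ * yᵀ) 0 0

noncomputable def Gam {n : ℕ} (M : Matrix (Fin n) (Fin n) ℝ)
    (u : Matrix (Fin 1) (Fin n) ℝ) : Matrix (Fin n) (Fin n) ℝ :=
  1 - (2 / kin M u u) • (M⁻¹ * uᵀ * u)

/-!
For a unit covector `u`, `p Γ(u) = p - 2⟨p,u⟩ u`, so `p Γ(u)Γ(v)Γ(u)` is `p` plus a combination of
`u` and `v` whose coefficients are polynomials in `a = ⟨p,u⟩`, `b = ⟨p,v⟩` and `c = ⟨u,v⟩`. At
`c = -1/2` it collapses to `p - 2(a + b)(u + v)`, which is symmetric in `u, v` and pairs to `-b`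
with `u` and to `-a` with `v`. Conversely, for `p = -(u + v)` the identity `⟨p_f,u⟩ = -⟨p,v⟩`
reads `(1 + c)(1 - c)(2c + 1) = 0`, and `|c| < 1` because `⟨u ∓ v, u ∓ v⟩ > 0`.
-/

section Bilinear

variable {n : ℕ} (M : Matrix (Fin n) (Fin n) ℝ)

lemma kin_add_left (x y z : Matrix (Fin 1) (Fin n) ℝ) :
    kin M (x + y) z = kin M x z + kin M y z := by
  simp [kin, Matrix.add_mul]

lemma kin_sub_left (x y z : Matrix (Fin 1) (Fin n) ℝ) :
    kin M (x - y) z = kin M x z - kin M y z := by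
  simp [kin, Matrix.sub_mul]

lemma kin_smul_left (r : ℝ) (x z : Matrix (Fin 1) (Fin n) ℝ) :
    kin M (r • x) z = r * kin M x z := by
  simp [kin]

lemma kin_neg_left (x z : Matrix (Fin 1) (Fin n) ℝ) :
    kin M (-x) z = -kin M x z := by
  simp [kin]

lemma kin_eq_dotProduct (x y : Matrix (Fin 1) (Fin n) ℝ) :
    kin M x y = x 0 ⬝ᵥ (M⁻¹ *ᵥ y 0) := by
  simp only [kin, Matrix.mul_apply, Matrix.transpose_apply, dotProduct, Matrix.mulVec,
    Finset.sum_mul, Finset.mul_sum]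
  rw [Finset.sum_comm]
  exact Finset.sum_congr rfl fun _ _ => Finset.sum_congr rfl fun _ _ => by ring

lemma mul_inv_mul_transpose_mul (p u : Matrix (Fin 1) (Fin n) ℝ) :
    p * (M⁻¹ * uᵀ * u) = kin M p u • u := by
  ext i j
  rw [← Matrix.mul_assoc, ← Matrix.mul_assoc, Matrix.mul_apply, Fin.sum_univ_one,
    Subsingleton.elim i 0]
  rfl

variable {M}

lemma kin_comm (hM : M.IsSymm) (x y : Matrix (Fin 1) (Fin n) ℝ) :
    kin M x y = kin M y x := by
  rw [kin_eq_dotProduct, kin_eq_dotProduct, Matrix.dotProduct_mulVec, ← Matrix.mulVec_transpose,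
    hM.inv.eq, dotProduct_comm]

lemma kin_self_pos (hM : M.PosDef) {x : Matrix (Fin 1) (Fin n) ℝ} (hx : x ≠ 0) :
    0 < kin M x x := by
  have hx0 : x 0 ≠ 0 := fun h => hx (by ext i j; rw [Subsingleton.elim i 0, h]; rfl)
  simpa [kin_eq_dotProduct] using hM.inv.dotProduct_mulVec_pos hx0

end Bilinear

section Reflection

variable {n : ℕ} {M : Matrix (Fin n) (Fin n) ℝ}

lemma mul_Gam (p u : Matrix (Fin 1) (Fin n) ℝ) :
    p * Gam M u = p - (2 * kin M p u / kin M u u) • u := by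
  rw [Gam, Matrix.mul_sub, Matrix.mul_one, Matrix.mul_smul, mul_inv_mul_transpose_mul, smul_smul,
    div_mul_eq_mul_div]

variable {u v : Matrix (Fin 1) (Fin n) ℝ}

lemma mul_Gam_of_kin_self (huu : kin M u u = 1) (p : Matrix (Fin 1) (Fin n) ℝ) :
    p * Gam M u = p - (2 * kin M p u) • u := by
  rw [mul_Gam, huu, div_one]

lemma mul_Gam_mul_Gam_mul_Gam (hM : M.IsSymm) (huu : kin M u u = 1) (hvv : kin M v v = 1)
    (p : Matrix (Fin 1) (Fin n) ℝ) :
    p * Gam M u * Gam M v * Gam M u =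
      p + (4 * kin M p v * kin M u v - 8 * kin M p u * kin M u v ^ 2) • u
        + (4 * kin M p u * kin M u v - 2 * kin M p v) • v := by
  simp only [mul_Gam_of_kin_self huu, mul_Gam_of_kin_self hvv, kin_sub_left, kin_smul_left,
    huu, kin_comm hM v u]
  module


lemma kin_mul_Gam_mul_Gam_mul_Gam_self (hM : M.IsSymm) (huu : kin M u u = 1)
    (hvv : kin M v v = 1) (p : Matrix (Fin 1) (Fin n) ℝ) :
    kin M (p * Gam M u * Gam M v * Gam M u) u =
      kin M p u + 2 * kin M p v * kin M u v - 4 * kin M p u * kin M u v ^ 2 := by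
  rw [mul_Gam_mul_Gam_mul_Gam hM huu hvv]
  simp only [kin_add_left, kin_smul_left, huu, kin_comm hM v u]
  ring

lemma mul_Gam_mul_Gam_mul_Gam_of_kin_eq (hM : M.IsSymm) (huu : kin M u u = 1)
    (hvv : kin M v v = 1) (huv : kin M u v = -(1 / 2)) (p : Matrix (Fin 1) (Fin n) ℝ) :
    p * Gam M u * Gam M v * Gam M u = p - (2 * (kin M p u + kin M p v)) • (u + v) := by
  rw [mul_Gam_mul_Gam_mul_Gam hM huu hvv, huv]
  module

lemma mul_Gam_mul_Gam_mul_Gam_comm_of_kin_eq (hM : M.IsSymm) (huu : kin M u u = 1)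
    (hvv : kin M v v = 1) (huv : kin M u v = -(1 / 2)) (p : Matrix (Fin 1) (Fin n) ℝ) :
    p * Gam M u * Gam M v * Gam M u = p * Gam M v * Gam M u * Gam M v := by
  rw [mul_Gam_mul_Gam_mul_Gam_of_kin_eq hM huu hvv huv,
    mul_Gam_mul_Gam_mul_Gam_of_kin_eq hM hvv huu (kin_comm hM v u ▸ huv), add_comm u,
    add_comm (kin M p u)]

end Reflection

section UnitCovectors

variable {n : ℕ} {M : Matrix (Fin n) (Fin n) ℝ} {u v : Matrix (Fin 1) (Fin n) ℝ}

lemma kin_lt_one_of_ne (hM : M.PosDef) (huu : kin M u u = 1) (hvv : kin M v v = 1)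
    (huv : u ≠ v) : kin M u v < 1 := by
  have hS : M.IsSymm := isHermitian_iff_isSymm.mp hM.isHermitian
  have h := kin_self_pos hM (sub_ne_zero.mpr huv)
  rw [kin_sub_left, kin_comm hS u, kin_comm hS v, kin_sub_left, kin_sub_left, huu, hvv,
    kin_comm hS v u] at h
  linarith

lemma neg_one_lt_kin_of_ne_neg (hM : M.PosDef) (huu : kin M u u = 1) (hvv : kin M v v = 1)
    (huv : u ≠ -v) : -1 < kin M u v := by
  have hS : M.IsSymm := isHermitian_iff_isSymm.mp hM.isHermitian
  have hnn : kin M (-v) (-v) = 1 := by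
    rw [kin_neg_left, kin_comm hS, kin_neg_left, neg_neg, hvv]
  have h := kin_lt_one_of_ne hM huu hnn huv
  rw [kin_comm hS, kin_neg_left, kin_comm hS] at h
  linarith

lemma kin_eq_neg_half_of_forall_kin_mul_Gam_mul_Gam_mul_Gam (hM : M.PosDef)
    (huu : kin M u u = 1) (hvv : kin M v v = 1) (huv : u ≠ v) (huv' : u ≠ -v)
    (H : ∀ p : Matrix (Fin 1) (Fin n) ℝ, kin M p u ≤ kin M p v → kin M p v < 0 →
      kin M (p * Gam M u * Gam M v * Gam M u) u = -kin M p v) :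
    kin M u v = -(1 / 2) := by
  have hS : M.IsSymm := isHermitian_iff_isSymm.mp hM.isHermitian
  have hlo := neg_one_lt_kin_of_ne_neg hM huu hvv huv'
  have hhi := kin_lt_one_of_ne hM huu hvv huv
  have hpu : kin M (-(u + v)) u = -(1 + kin M u v) := by
    rw [kin_neg_left, kin_add_left, huu, kin_comm hS v u]
  have hpv : kin M (-(u + v)) v = -(1 + kin M u v) := by
    rw [kin_neg_left, kin_add_left, hvv, add_comm]
  have h := H (-(u + v)) (by rw [hpu, hpv]) (by rw [hpv]; linarith)
  rw [kin_mul_Gam_mul_Gam_mul_Gam_self hS huu hvv, hpu, hpv] at h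
  have hfac : (1 + kin M u v) * (1 - kin M u v) * (2 * kin M u v + 1) = 0 := by
    linear_combination (-1 / 2) * h
  have hne : (1 + kin M u v) * (1 - kin M u v) ≠ 0 := (mul_pos (by linarith) (by linarith)).ne'
  linarith [(mul_eq_zero.mp hfac).resolve_left hne]

end UnitCovectors


theorem three_stage_impact {n : ℕ}
    (M : Matrix (Fin n) (Fin n) ℝ) (hM : M.PosDef)
    (u v : Matrix (Fin 1) (Fin n) ℝ)
    (huu : kin M u u = 1) (hvv : kin M v v = 1)
    (huv : u ≠ v) (huv' : u ≠ -v) :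
    kin M u v = -(1/2) ↔
      ∀ p : Matrix (Fin 1) (Fin n) ℝ,
        kin M p u ≤ kin M p v → kin M p v < 0 →
        p * Gam M u * Gam M v * Gam M u = p * Gam M v * Gam M u * Gam M v ∧
        kin M (p * Gam M u * Gam M v * Gam M u) u = - kin M p v ∧
        kin M (p * Gam M u * Gam M v * Gam M u) v = - kin M p u ∧
        0 < kin M (p * Gam M u * Gam M v * Gam M u) u ∧
        0 < kin M (p * Gam M u * Gam M v * Gam M u) v := by
  have hS : M.IsSymm := isHermitian_iff_isSymm.mp hM.isHermitian
  refine ⟨fun hc p hpuv hpv => ?_, fun H =>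
    kin_eq_neg_half_of_forall_kin_mul_Gam_mul_Gam_mul_Gam hM huu hvv huv huv'
      fun p hpuv hpv => (H p hpuv hpv).2.1⟩
  have hbraid := mul_Gam_mul_Gam_mul_Gam_comm_of_kin_eq hS huu hvv hc p
  have hu : kin M (p * Gam M u * Gam M v * Gam M u) u = -kin M p v := by
    rw [kin_mul_Gam_mul_Gam_mul_Gam_self hS huu hvv, hc]
    ring
  have hv : kin M (p * Gam M u * Gam M v * Gam M u) v = -kin M p u := by
    rw [hbraid, kin_mul_Gam_mul_Gam_mul_Gam_self hS hvv huu, kin_comm hS v u, hc]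
    ring
  exact ⟨hbraid, hu, hv, by linarith, by linarith⟩
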